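/- arXiv:2507.04220 — 4 statements merged into one kernel-verified Lean document; each statement's English description precedes it below -/
import Mathlib

section
/- Let C be a triangulated category. The assignments (T, F) ↦ (Infl T, Infl F) and (L, R) ↦ (Cone L, Cone R) are mutually inverse: for every t-structure (T, F) in C one has Cone(Infl T) = T and Cone(Infl F) = F, and for every inflation factorization system (L, R) in C one has Infl(Cone L) = L and Infl(Cone R) = R. -/
open CategoryTheory CategoryTheory.Limits CategoryTheory.Pretriangulated

namespace TriangFS

variable {C : Type*} [Category C] [Preadditive C] [HasZeroObject C]
  [HasShift C ℤ] [∀ n : ℤ, (shiftFunctor C n).Additive]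
  [Pretriangulated C] [IsTriangulated C]

/-- `Z` is a cone of `f : X ⟶ Y` if it fits in a distinguished triangle
`X ⟶ Y ⟶ Z ⟶ X⟦1⟧`. -/
def IsConeOf {X Y : C} (f : X ⟶ Y) (Z : C) : Prop :=
  ∃ (g : Y ⟶ Z) (h : Z ⟶ X⟦(1 : ℤ)⟧), Triangle.mk f g h ∈ distTriang C

/-- `l ⊥ r` iff `Hom(C_l, C_r) = 0` and `Hom(C_l, C_r⟦-1⟧) = 0` for cones
`C_l` of `l` and `C_r` of `r`. -/
def ConePerp {X Y Z W : C} (l : X ⟶ Y) (r : Z ⟶ W) : Prop :=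
  ∀ (Cl Cr : C), IsConeOf l Cl → IsConeOf r Cr →
    (∀ φ : Cl ⟶ Cr, φ = 0) ∧ (∀ φ : Cl ⟶ Cr⟦(-1 : ℤ)⟧, φ = 0)

/-- `Infl U`: morphisms admitting a cone in `U`. -/
def Infl (U : Set C) : MorphismProperty C :=
  fun _ _ f => ∃ Z ∈ U, IsConeOf f Z

/-- `Cone L`: objects isomorphic to a cone of some morphism in `L`. -/
def ConeClass (L : MorphismProperty C) : Set C :=
  {Z | ∃ (X Y : C) (f : X ⟶ Y), L f ∧ IsConeOf f Z}

/-- A `t`-structure `(U, V)` in a triangulated category. -/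
structure IsTStructure (U V : Set C) : Prop where
  isoClosed_left : ∀ {X Y : C}, (X ≅ Y) → X ∈ U → Y ∈ U
  isoClosed_right : ∀ {X Y : C}, (X ≅ Y) → X ∈ V → Y ∈ V
  exists_triangle : ∀ X : C, ∃ (U' V' : C) (_ : U' ∈ U) (_ : V' ∈ V)
      (f : U' ⟶ X) (g : X ⟶ V') (h : V' ⟶ U'⟦(1 : ℤ)⟧),
      Triangle.mk f g h ∈ distTriang C
  hom_zero : ∀ {X Y : C}, X ∈ U → Y ∈ V → ∀ f : X ⟶ Y, f = 0
  shift_mem : ∀ {X : C}, X ∈ U → X⟦(1 : ℤ)⟧ ∈ U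

/-- An inflation factorization system `(L, R)` in a triangulated category. -/
structure IsInflFactorizationSystem (L R : MorphismProperty C) : Prop where
  factor : ∀ {X Y : C} (f : X ⟶ Y),
    ∃ (K : C) (l : X ⟶ K) (r : K ⟶ Y), L l ∧ R r ∧ l ≫ r = f
  left_eq : ∀ {X Y : C} (f : X ⟶ Y),
    L f ↔ ∀ {Z W : C} (g : Z ⟶ W), R g → ConePerp f g
  right_eq : ∀ {Z W : C} (g : Z ⟶ W),
    R g ↔ ∀ {X Y : C} (f : X ⟶ Y), L f → ConePerp f g

/-
Both `Infl` and `Cone` see a morphism only through its cones, which are unique up to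
isomorphism. So `Cone ∘ Infl` fixes every isomorphism-closed class of objects (such as
the two halves of a t-structure), and `Infl ∘ Cone` fixes every class of morphisms that
contains each morphism sharing a cone with one of its members. Orthogonality is defined
through cones, so the classes `⊥R` and `L⊥` of an inflation factorization system are of
this kind.
-/

section

variable {D : Type*} [Category D] [HasZeroMorphisms D]

lemma eq_zero_of_iso {A A' B B' : D} (e : A ≅ A') (e' : B ≅ B')
    (h : ∀ φ : A ⟶ B, φ = 0) (φ : A' ⟶ B') : φ = 0 :=
  calc φ = e.inv ≫ (e.hom ≫ φ ≫ e'.inv) ≫ e'.hom := by simp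
    _ = 0 := by rw [h (e.hom ≫ φ ≫ e'.inv)]; simp

end

section

open ZeroObject

variable {D : Type*} [Category D] [Preadditive D] [HasZeroObject D] [HasShift D ℤ]
  [∀ n : ℤ, (shiftFunctor D n).Additive] [Pretriangulated D]

lemma IsConeOf.nonempty_iso {X Y Z Z' : D} {f : X ⟶ Y} (h : IsConeOf f Z)
    (h' : IsConeOf f Z') : Nonempty (Z ≅ Z') := by
  obtain ⟨g, k, hT⟩ := h
  obtain ⟨g', k', hT'⟩ := h'
  exact ⟨Triangle.π₃.mapIso
    (isoTriangleOfIso₁₂ _ _ hT hT' (Iso.refl _) (Iso.refl _)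
      ((Category.comp_id f).trans (Category.id_comp f).symm))⟩

lemma exists_isConeOf {X Y : D} (f : X ⟶ Y) : ∃ Z, IsConeOf f Z := by
  obtain ⟨Z, g, h, hT⟩ := distinguished_cocone_triangle f
  exact ⟨Z, g, h, hT⟩

lemma isConeOf_zero (X : D) : IsConeOf (0 : 0 ⟶ X) X :=
  ⟨𝟙 X, 0, contractible_distinguished₁ X⟩

lemma ConePerp.of_isConeOf_left {X Y X' Y' Z W K : D} {l : X ⟶ Y} {f : X' ⟶ Y'}
    {r : Z ⟶ W} (hl : IsConeOf l K) (hf : IsConeOf f K) (h : ConePerp l r) :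
    ConePerp f r := by
  intro Cf Cr hCf hCr
  obtain ⟨e⟩ := hf.nonempty_iso hCf
  obtain ⟨h₀, h₁⟩ := h K Cr hl hCr
  exact ⟨eq_zero_of_iso e (Iso.refl _) h₀, eq_zero_of_iso e (Iso.refl _) h₁⟩

lemma ConePerp.of_isConeOf_right {X Y Z W Z' W' K : D} {l : X ⟶ Y} {r : Z ⟶ W}
    {g : Z' ⟶ W'} (hr : IsConeOf r K) (hg : IsConeOf g K) (h : ConePerp l r) :
    ConePerp l g := by
  intro Cl Cg hCl hCg
  obtain ⟨e⟩ := hg.nonempty_iso hCg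
  obtain ⟨h₀, h₁⟩ := h Cl K hCl hr
  exact ⟨eq_zero_of_iso (Iso.refl _) e h₀,
    eq_zero_of_iso (Iso.refl _) ((shiftFunctor D (-1 : ℤ)).mapIso e) h₁⟩

lemma coneClass_infl_eq {U : Set D} (hU : ∀ {X Y : D}, (X ≅ Y) → X ∈ U → Y ∈ U) :
    ConeClass (Infl U) = U := by
  ext Z
  constructor
  · rintro ⟨X, Y, f, ⟨K, hK, hKf⟩, hZf⟩
    obtain ⟨e⟩ := hKf.nonempty_iso hZf
    exact hU e hK
  · intro hZ
    exact ⟨0, Z, 0, ⟨Z, hZ, isConeOf_zero Z⟩, isConeOf_zero Z⟩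

lemma infl_coneClass_eq {L : MorphismProperty D}
    (hL : ∀ {X Y X' Y' K : D} {l : X ⟶ Y} {f : X' ⟶ Y'},
      L l → IsConeOf l K → IsConeOf f K → L f) :
    Infl (ConeClass L) = L := by
  ext X Y f
  constructor
  · rintro ⟨K, ⟨X', Y', l, hl, hKl⟩, hKf⟩
    exact hL hl hKl hKf
  · intro hf
    obtain ⟨K, hK⟩ := exists_isConeOf f
    exact ⟨K, ⟨X, Y, f, hf, hK⟩, hK⟩

lemma leftPerp_closed_under_cones {L R : MorphismProperty D}
    (hL : ∀ {X Y : D} (f : X ⟶ Y), L f ↔ ∀ {Z W : D} (g : Z ⟶ W), R g → ConePerp f g)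
    {X Y X' Y' K : D} {l : X ⟶ Y} {f : X' ⟶ Y'}
    (hl : L l) (hKl : IsConeOf l K) (hKf : IsConeOf f K) : L f :=
  (hL f).2 fun g hg => ((hL l).1 hl g hg).of_isConeOf_left hKl hKf

lemma rightPerp_closed_under_cones {L R : MorphismProperty D}
    (hR : ∀ {Z W : D} (g : Z ⟶ W), R g ↔ ∀ {X Y : D} (f : X ⟶ Y), L f → ConePerp f g)
    {Z W Z' W' K : D} {r : Z ⟶ W} {g : Z' ⟶ W'}
    (hr : R r) (hKr : IsConeOf r K) (hKg : IsConeOf g K) : R g :=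
  (hR g).2 fun f hf => ((hR r).1 hr f hf).of_isConeOf_right hKr hKg

end

/-- the assignments `(T, F) ↦ (Infl T, Infl F)` and
`(L, R) ↦ (Cone L, Cone R)` are mutually inverse. -/
theorem tStructure_inflFactorizationSystem_bijection :
    (∀ T F : Set C, IsTStructure T F →
      ConeClass (Infl T) = T ∧ ConeClass (Infl F) = F) ∧
    (∀ L R : MorphismProperty C, IsInflFactorizationSystem L R →
      Infl (ConeClass L) = L ∧ Infl (ConeClass R) = R) := by
  refine ⟨fun T F hTF => ⟨coneClass_infl_eq hTF.isoClosed_left,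
      coneClass_infl_eq hTF.isoClosed_right⟩,
    fun L R hLR => ⟨infl_coneClass_eq (leftPerp_closed_under_cones hLR.left_eq),
      infl_coneClass_eq (rightPerp_closed_under_cones hLR.right_eq)⟩⟩

end TriangFS
end

section
/- Let C be a triangulated category and let (T, F) be a t-structure in C. Then (Defl T, Defl F) is a deflation factorization system in C. -/
open CategoryTheory CategoryTheory.Limits CategoryTheory.Pretriangulated

namespace TriangFS

variable {C : Type*} [Category C] [Preadditive C] [HasZeroObject C]
  [HasShift C ℤ] [∀ n : ℤ, (shiftFunctor C n).Additive]
  [Pretriangulated C] [IsTriangulated C]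

/-- `K` is a cocone of `f : X ⟶ Y` if it fits in a distinguished triangle
`K ⟶ X ⟶ Y ⟶ K⟦1⟧`. -/
def IsCoconeOf {X Y : C} (f : X ⟶ Y) (K : C) : Prop :=
  ∃ (g : K ⟶ X) (h : Y ⟶ K⟦(1 : ℤ)⟧), Triangle.mk g f h ∈ distTriang C

/-- `l ⊥ r` iff `Hom(K_l, K_r) = 0` and `Hom(K_l, K_r⟦-1⟧) = 0` for cocones
`K_l` of `l` and `K_r` of `r`. -/
def CoconePerp {X Y Z W : C} (l : X ⟶ Y) (r : Z ⟶ W) : Prop :=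
  ∀ (Kl Kr : C), IsCoconeOf l Kl → IsCoconeOf r Kr →
    (∀ φ : Kl ⟶ Kr, φ = 0) ∧ (∀ φ : Kl ⟶ Kr⟦(-1 : ℤ)⟧, φ = 0)

/-- `Defl U`: morphisms admitting a cocone in `U`. -/
def Defl (U : Set C) : MorphismProperty C :=
  fun _ _ f => ∃ K ∈ U, IsCoconeOf f K

/-- `Cocone L`: objects isomorphic to a cocone of some morphism in `L`. -/
def CoconeClass (L : MorphismProperty C) : Set C :=
  {K | ∃ (X Y : C) (f : X ⟶ Y), L f ∧ IsCoconeOf f K}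

/-- A deflation factorization system `(L, R)` in a triangulated category. -/
structure IsDeflFactorizationSystem (L R : MorphismProperty C) : Prop where
  factor : ∀ {X Y : C} (f : X ⟶ Y),
    ∃ (K : C) (l : X ⟶ K) (r : K ⟶ Y), L l ∧ R r ∧ l ≫ r = f
  left_eq : ∀ {X Y : C} (f : X ⟶ Y),
    L f ↔ ∀ {Z W : C} (g : Z ⟶ W), R g → CoconePerp f g
  right_eq : ∀ {Z W : C} (g : Z ⟶ W),
    R g ↔ ∀ {X Y : C} (f : X ⟶ Y), L f → CoconePerp f g

/-!
Defl T and Defl F are orthogonal because Hom(T, F) = 0 and, as T⟦1⟧ ⊆ T, also Hom(T, F⟦-1⟧) = 0.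
Conversely, every object V is the cocone of the zero map 0 ⟶ V⟦1⟧, so a morphism orthogonal to
Defl F has a cocone K with Hom(K, F) = 0; in the truncation triangle U → K → V → U⟦1⟧ the map
K → V then vanishes, which forces V = 0 and K ≅ U ∈ T (dually for Defl F). To factor f : X ⟶ Y,
truncate its cocone K as U → K → V and let M be the cone of U → K → X; the octahedron on
U → K → X yields a distinguished triangle V → M → Y → V⟦1⟧, so X → M → Y is the factorization.
-/

open ZeroObject

-- Only the factorization needs the octahedral axiom, so this section drops `IsTriangulated C`.
section

variable {C : Type*} [Category C] [Preadditive C] [HasZeroObject C]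
  [HasShift C ℤ] [∀ n : ℤ, (shiftFunctor C n).Additive] [Pretriangulated C]

lemma exists_isCoconeOf {X Y : C} (f : X ⟶ Y) : ∃ K, IsCoconeOf f K := by
  obtain ⟨K, g, h, hT⟩ := distinguished_cocone_triangle₁ f
  exact ⟨K, g, h, hT⟩

lemma isCoconeOf_zero (V : C) : IsCoconeOf (0 : (0 : C) ⟶ V⟦(1 : ℤ)⟧) V :=
  ⟨0, 𝟙 _, contractible_distinguished₂ V⟩

lemma IsCoconeOf.nonempty_iso {X Y : C} {f : X ⟶ Y} {K K' : C}
    (hK : IsCoconeOf f K) (hK' : IsCoconeOf f K') : Nonempty (K ≅ K') := by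
  obtain ⟨g, h, hT⟩ := hK
  obtain ⟨g', h', hT'⟩ := hK'
  have hf : f ≫ 𝟙 Y = 𝟙 X ≫ f := (Category.comp_id f).trans (Category.id_comp f).symm
  obtain ⟨a, ha₁, ha₃⟩ := complete_distinguished_triangle_morphism₁ _ _ hT hT' (𝟙 X) (𝟙 Y) hf
  exact ⟨@asIso _ _ _ _ a <| isIso₁_of_isIso₂₃ (Triangle.homMk _ _ a (𝟙 X) (𝟙 Y) ha₁ hf ha₃)
    hT hT' (IsIso.id X) (IsIso.id Y)⟩

namespace IsTStructure

variable {T F : Set C} (h : IsTStructure T F)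
include h

lemma hom_shift_neg_one_eq_zero {X Y : C} (hX : X ∈ T) (hY : Y ∈ F)
    (φ : X ⟶ Y⟦(-1 : ℤ)⟧) : φ = 0 := by
  have hφ : φ⟦(1 : ℤ)⟧' ≫ (shiftFunctorCompIsoId C (-1 : ℤ) 1 (by omega)).hom.app Y = 0 :=
    h.hom_zero (h.shift_mem hX) hY _
  rwa [Preadditive.IsIso.comp_right_eq_zero, Functor.map_eq_zero_iff] at hφ

lemma mem_left_of_forall_hom_eq_zero {K : C} (hK : ∀ V ∈ F, ∀ φ : K ⟶ V, φ = 0) : K ∈ T := by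
  obtain ⟨U, V, hU, hV, u, p, w, hT⟩ := h.exists_triangle K
  obtain ⟨ψ, hψ⟩ := Triangle.yoneda_exact₃ _ hT (𝟙 V)
    (by change p ≫ 𝟙 V = 0; rw [hK V hV p, zero_comp])
  have hV0 : IsZero V := by
    rw [IsZero.iff_id_eq_zero, hψ, h.hom_zero (h.shift_mem hU) hV ψ]
    exact comp_zero
  have : IsIso u := (Triangle.isZero₃_iff_isIso₁ _ hT).1 hV0
  exact h.isoClosed_left (asIso u) hU

lemma mem_right_of_forall_hom_eq_zero {K : C} (hK : ∀ U ∈ T, ∀ φ : U ⟶ K, φ = 0) : K ∈ F := by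
  obtain ⟨U, V, hU, hV, u, p, w, hT⟩ := h.exists_triangle K
  obtain ⟨ψ, hψ⟩ := Triangle.coyoneda_exact₂ _ (inv_rot_of_distTriang _ hT) (𝟙 U)
    (by change 𝟙 U ≫ u = 0; rw [hK U hU u, comp_zero])
  have hU0 : IsZero U := by
    rw [IsZero.iff_id_eq_zero, hψ, h.hom_shift_neg_one_eq_zero hU hV ψ]
    exact zero_comp
  have : IsIso p := (Triangle.isZero₁_iff_isIso₂ _ hT).1 hU0
  exact h.isoClosed_right (asIso p).symm hV

lemma coconePerp {X Y Z W : C} {l : X ⟶ Y} {r : Z ⟶ W} (hl : Defl T l) (hr : Defl F r) :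
    CoconePerp l r := by
  obtain ⟨K, hKT, hK⟩ := hl
  obtain ⟨K', hK'F, hK'⟩ := hr
  intro Kl Kr hKl hKr
  obtain ⟨i⟩ := hKl.nonempty_iso hK
  obtain ⟨j⟩ := hKr.nonempty_iso hK'
  refine ⟨fun φ => ?_, fun φ => ?_⟩
  · simpa using h.hom_zero hKT hK'F (i.inv ≫ φ ≫ j.hom)
  · simpa using h.hom_shift_neg_one_eq_zero hKT hK'F (i.inv ≫ φ ≫ j.hom⟦(-1 : ℤ)⟧')

lemma defl_left_of_forall_coconePerp {X Y : C} {f : X ⟶ Y}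
    (H : ∀ {Z W : C} (g : Z ⟶ W), Defl F g → CoconePerp f g) : Defl T f := by
  obtain ⟨K, hK⟩ := exists_isCoconeOf f
  refine ⟨K, h.mem_left_of_forall_hom_eq_zero fun V hV => ?_, hK⟩
  exact (H _ ⟨V, hV, isCoconeOf_zero V⟩ K V hK (isCoconeOf_zero V)).1

lemma defl_right_of_forall_coconePerp {Z W : C} {g : Z ⟶ W}
    (H : ∀ {X Y : C} (f : X ⟶ Y), Defl T f → CoconePerp f g) : Defl F g := by
  obtain ⟨K, hK⟩ := exists_isCoconeOf g
  refine ⟨K, h.mem_right_of_forall_hom_eq_zero fun U hU => ?_, hK⟩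
  exact (H _ ⟨U, hU, isCoconeOf_zero U⟩ U K (isCoconeOf_zero U) hK).1

end IsTStructure

end

lemma IsTStructure.exists_defl_factorization {T F : Set C} (h : IsTStructure T F)
    {X Y : C} (f : X ⟶ Y) :
    ∃ (M : C) (l : X ⟶ M) (r : M ⟶ Y), Defl T l ∧ Defl F r ∧ l ≫ r = f := by
  obtain ⟨K, k, δ, hKXY⟩ := distinguished_cocone_triangle₁ f
  obtain ⟨U, V, hU, hV, u, p, w, hUKV⟩ := h.exists_triangle K
  obtain ⟨M, l, w', hUXM⟩ := distinguished_cocone_triangle (u ≫ k)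
  let O := Triangulated.someOctahedron rfl hUKV hKXY hUXM
  exact ⟨M, l, O.m₃, ⟨U, hU, u ≫ k, w', hUXM⟩, ⟨V, hV, O.m₁, δ ≫ p⟦(1 : ℤ)⟧', O.mem⟩, O.comm₃⟩

/-- if `(T, F)` is a `t`-structure in a triangulated category `C`,
then `(Defl T, Defl F)` is a deflation factorization system in `C`. -/
theorem tStructure_defl_isDeflFactorizationSystem
    (T F : Set C) (h : IsTStructure T F) :
    IsDeflFactorizationSystem (Defl T) (Defl F) :=
  { factor := h.exists_defl_factorization
    left_eq := fun _ => ⟨fun hf _ _ _ hg => h.coconePerp hf hg, h.defl_left_of_forall_coconePerp⟩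
    right_eq := fun _ =>
      ⟨fun hg _ _ _ hf => h.coconePerp hf hg, h.defl_right_of_forall_coconePerp⟩ }

end TriangFS
end

section
/- Let (A, B, C) be a recollement of abelian categories with functors i^*, i_*, i^!, j_!, j^*, j_*, and assume that i^* and i^! are exact. Let (E1, M1) and (E2, M2) be monomorphism factorization systems in A and C, respectively. Set E = {monomorphisms f in B | i^*(f) ∈ E1 and j^*(f) ∈ E2} and M = {monomorphisms g in B | i^!(g) ∈ M1 and j^*(g) ∈ M2}. Then (E, M) is a monomorphism factorization system in B. -/
open CategoryTheory CategoryTheory.Limits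

namespace RecollementFS

/-- A recollement of abelian categories `(A, B, C)`. -/
structure AbelianRecollement (A B C : Type*) [Category A] [Category B] [Category C]
    [Abelian A] [Abelian B] [Abelian C] where
  /-- `i_* : A ⥤ B` -/
  iStar : A ⥤ B
  /-- `i^* : B ⥤ A` -/
  iUpperStar : B ⥤ A
  /-- `i^! : B ⥤ A` -/
  iShriek : B ⥤ A
  /-- `j^* : B ⥤ C` -/
  jUpperStar : B ⥤ C
  /-- `j_! : C ⥤ B` -/
  jShriek : C ⥤ B
  /-- `j_* : C ⥤ B` -/
  jStar : C ⥤ B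
  /-- `i^* ⊣ i_*` -/
  adj₁ : iUpperStar ⊣ iStar
  /-- `i_* ⊣ i^!` -/
  adj₂ : iStar ⊣ iShriek
  /-- `j_! ⊣ j^*` -/
  adj₃ : jShriek ⊣ jUpperStar
  /-- `j^* ⊣ j_*` -/
  adj₄ : jUpperStar ⊣ jStar
  iStar_full : iStar.Full
  iStar_faithful : iStar.Faithful
  jShriek_full : jShriek.Full
  jShriek_faithful : jShriek.Faithful
  jStar_full : jStar.Full
  jStar_faithful : jStar.Faithful
  /-- `j^*(X) ≅ 0` iff `X` lies in the essential image of `i_*`. -/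
  isZero_iff : ∀ X : B, IsZero (jUpperStar.obj X) ↔ ∃ Y : A, Nonempty (iStar.obj Y ≅ X)
  /-- the sequence `0 ⟶ i_* i^! X ⟶ X ⟶ j_* j^* X` is exact. -/
  left_exact_seq : ∀ X : B, Mono (adj₂.counit.app X) ∧
    ∃ w : adj₂.counit.app X ≫ adj₄.unit.app X = 0,
      (ShortComplex.mk (adj₂.counit.app X) (adj₄.unit.app X) w).Exact
  /-- the sequence `j_! j^* X ⟶ X ⟶ i_* i^* X ⟶ 0` is exact. -/
  right_exact_seq : ∀ X : B, Epi (adj₁.unit.app X) ∧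
    ∃ w : adj₃.counit.app X ≫ adj₁.unit.app X = 0,
      (ShortComplex.mk (adj₃.counit.app X) (adj₁.unit.app X) w).Exact

variable {𝒞 : Type*} [Category 𝒞] [Abelian 𝒞]

/-- For monomorphisms `l`, `r`, `l ⊥ r` iff `Hom(coker l, coker r) = 0`. -/
def MonoPerp {A B X Y : 𝒞} (l : A ⟶ B) (r : X ⟶ Y) : Prop :=
  ∀ φ : cokernel l ⟶ cokernel r, φ = 0

/-- A monomorphism factorization system `(L, R)` in an abelian category. -/
structure IsMonoFactorizationSystem (L R : MorphismProperty 𝒞) : Prop where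
  mono_of_L : ∀ {X Y : 𝒞} (f : X ⟶ Y), L f → Mono f
  mono_of_R : ∀ {X Y : 𝒞} (f : X ⟶ Y), R f → Mono f
  factor : ∀ {X Y : 𝒞} (f : X ⟶ Y), Mono f →
    ∃ (K : 𝒞) (l : X ⟶ K) (r : K ⟶ Y), L l ∧ R r ∧ l ≫ r = f
  left_eq : ∀ {X Y : 𝒞} (f : X ⟶ Y),
    L f ↔ (Mono f ∧ ∀ {Z W : 𝒞} (g : Z ⟶ W), R g → MonoPerp f g)
  right_eq : ∀ {Z W : 𝒞} (g : Z ⟶ W),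
    R g ↔ (Mono g ∧ ∀ {X Y : 𝒞} (f : X ⟶ Y), L f → MonoPerp f g)

/-!
A monomorphism factorization system `(L, R)` is the same thing as a torsion pair `(T, F)`:
perpendicularity of monomorphisms only sees their cokernels, so `L f ↔ T (coker f)` and
`R g ↔ F (coker g)` with `T X := L (0 ⟶ X)` and `F X := R (0 ⟶ X)`. Torsion pairs glue along a
recollement: `T = {X | i^* X ∈ T₁, j^* X ∈ T₂}` and `F = {X | i^! X ∈ F₁, j^* X ∈ F₂}`, and since
`i^*`, `i^!`, `j^*` commute with cokernels of monomorphisms, the glued pair corresponds to `(E, M)`.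
-/

open ZeroObject

lemma MonoPerp.of_cokernel_iso {X Y Z W X' Y' Z' W' : 𝒞} {f : X ⟶ Y} {g : Z ⟶ W}
    {f' : X' ⟶ Y'} {g' : Z' ⟶ W'} (e₁ : cokernel f ≅ cokernel f') (e₂ : cokernel g ≅ cokernel g')
    (h : MonoPerp f g) : MonoPerp f' g' := fun φ => by
  simpa using h (e₁.hom ≫ φ ≫ e₂.inv)

lemma MonoPerp.eq_zero_of_zero_left {X Z W : 𝒞} {g : Z ⟶ W}
    (h : MonoPerp (0 : (0 : 𝒞) ⟶ X) g) (φ : X ⟶ cokernel g) : φ = 0 := by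
  simpa only [Preadditive.IsIso.comp_left_eq_zero] using h (cokernelZeroIsoTarget.hom ≫ φ)

lemma MonoPerp.eq_zero_of_zero_right {X Y Z : 𝒞} {f : X ⟶ Y}
    (h : MonoPerp f (0 : (0 : 𝒞) ⟶ Z)) (φ : cokernel f ⟶ Z) : φ = 0 := by
  simpa only [Preadditive.IsIso.comp_right_eq_zero] using h (φ ≫ cokernelZeroIsoTarget.inv)

def IsCokernelInvariant (P : MorphismProperty 𝒞) : Prop :=
  ∀ ⦃X Y X' Y' : 𝒞⦄ (f : X ⟶ Y) (f' : X' ⟶ Y') [Mono f] [Mono f'],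
    (cokernel f ≅ cokernel f') → P f → P f'

namespace IsCokernelInvariant

variable {P : MorphismProperty 𝒞}

lemma iff_of_cokernel_iso (hP : IsCokernelInvariant P) {X Y X' Y' : 𝒞} {f : X ⟶ Y}
    {f' : X' ⟶ Y'} [Mono f] [Mono f'] (e : cokernel f ≅ cokernel f') : P f ↔ P f' :=
  ⟨hP f f' e, hP f' f e.symm⟩

lemma iff_zero_cokernel (hP : IsCokernelInvariant P) {X Y : 𝒞} (f : X ⟶ Y) [Mono f] :
    P f ↔ P (0 : (0 : 𝒞) ⟶ cokernel f) :=
  hP.iff_of_cokernel_iso cokernelZeroIsoTarget.symm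

lemma zero_of_iso (hP : IsCokernelInvariant P) {X Y : 𝒞} (e : X ≅ Y)
    (h : P (0 : (0 : 𝒞) ⟶ X)) : P (0 : (0 : 𝒞) ⟶ Y) :=
  hP _ _ (cokernelZeroIsoTarget ≪≫ e ≪≫ cokernelZeroIsoTarget.symm) h

lemma map_iff (hP : IsCokernelInvariant P) {𝒟 : Type*} [Category 𝒟] [Abelian 𝒟] (G : 𝒟 ⥤ 𝒞)
    [G.PreservesZeroMorphisms] [G.PreservesMonomorphisms] {X Y : 𝒟} (f : X ⟶ Y) [Mono f]
    [PreservesColimit (parallelPair f 0) G] :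
    P (G.map f) ↔ P (0 : (0 : 𝒞) ⟶ G.obj (cokernel f)) :=
  hP.iff_of_cokernel_iso ((PreservesCokernel.iso G f).symm ≪≫ cokernelZeroIsoTarget.symm)

end IsCokernelInvariant

namespace IsMonoFactorizationSystem

variable {L R : MorphismProperty 𝒞}

lemma isCokernelInvariant_left (hLR : IsMonoFactorizationSystem L R) :
    IsCokernelInvariant L := fun _ _ _ _ f f' _ _ e hf => by
  rw [hLR.left_eq] at hf ⊢
  exact ⟨inferInstance, fun g hg => (hf.2 g hg).of_cokernel_iso e (Iso.refl _)⟩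

lemma isCokernelInvariant_right (hLR : IsMonoFactorizationSystem L R) :
    IsCokernelInvariant R := fun _ _ _ _ g g' _ _ e hg => by
  rw [hLR.right_eq] at hg ⊢
  exact ⟨inferInstance, fun f hf => (hg.2 f hf).of_cokernel_iso (Iso.refl _) e⟩

end IsMonoFactorizationSystem

structure IsTorsionPair (T F : 𝒞 → Prop) : Prop where
  T_of_iso : ∀ {X Y : 𝒞}, (X ≅ Y) → T X → T Y
  F_of_iso : ∀ {X Y : 𝒞}, (X ≅ Y) → F X → F Y
  hom_eq_zero : ∀ {X Y : 𝒞}, T X → F Y → ∀ φ : X ⟶ Y, φ = 0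
  exists_mono : ∀ X : 𝒞, ∃ (t : 𝒞) (i : t ⟶ X), Mono i ∧ T t ∧ F (cokernel i)

lemma IsMonoFactorizationSystem.isTorsionPair {L R : MorphismProperty 𝒞}
    (hLR : IsMonoFactorizationSystem L R) :
    IsTorsionPair (fun X => L (0 : (0 : 𝒞) ⟶ X)) (fun X => R (0 : (0 : 𝒞) ⟶ X)) where
  T_of_iso e := hLR.isCokernelInvariant_left.zero_of_iso e
  F_of_iso e := hLR.isCokernelInvariant_right.zero_of_iso e
  hom_eq_zero hX hY φ := by
    simpa only [Preadditive.IsIso.comp_right_eq_zero] using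
      (((hLR.left_eq _).1 hX).2 _ hY).eq_zero_of_zero_left (φ ≫ cokernelZeroIsoTarget.inv)
  exists_mono X := by
    obtain ⟨K, l, r, hl, hr, -⟩ := hLR.factor (0 : (0 : 𝒞) ⟶ X) inferInstance
    have := hLR.mono_of_R r hr
    refine ⟨K, r, this, ?_, (hLR.isCokernelInvariant_right.iff_zero_cokernel r).1 hr⟩
    rwa [(isZero_zero 𝒞).eq_of_src l 0] at hl

namespace IsTorsionPair

variable {T F : 𝒞 → Prop}

lemma T_of_forall_hom_eq_zero (h : IsTorsionPair T F) {X : 𝒞}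
    (hX : ∀ Y, F Y → ∀ φ : X ⟶ Y, φ = 0) : T X := by
  obtain ⟨t, i, _, ht, hc⟩ := h.exists_mono X
  have : Epi i := Abelian.epi_of_cokernel_π_eq_zero i (hX _ hc _)
  have : IsIso i := isIso_of_mono_of_epi i
  exact h.T_of_iso (asIso i) ht

lemma F_of_forall_hom_eq_zero (h : IsTorsionPair T F) {X : 𝒞}
    (hX : ∀ Y, T Y → ∀ φ : Y ⟶ X, φ = 0) : F X := by
  obtain ⟨t, i, _, ht, hc⟩ := h.exists_mono X
  exact h.F_of_iso (cokernelIsoOfEq (hX _ ht i) ≪≫ cokernelZeroIsoTarget) hc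

lemma F_of_mono (h : IsTorsionPair T F) {X Y : 𝒞} (m : X ⟶ Y) [Mono m] (hY : F Y) : F X :=
  h.F_of_forall_hom_eq_zero fun _ hZ φ => by
    rw [← cancel_mono m, zero_comp]
    exact h.hom_eq_zero hZ hY _

end IsTorsionPair

lemma exists_factorization_of_mono_cokernel {X Y t : 𝒞} (f : X ⟶ Y) [Mono f]
    (i : t ⟶ cokernel f) [Mono i] :
    ∃ (K : 𝒞) (l : X ⟶ K) (r : K ⟶ Y), Mono l ∧ Mono r ∧ l ≫ r = f ∧
      Nonempty (cokernel l ≅ t) ∧ Nonempty (cokernel r ≅ cokernel i) := by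
  set π := cokernel.π f
  set r := kernel.ι (π ≫ cokernel.π i)
  set l := kernel.lift (π ≫ cokernel.π i) f (by simp [π])
  have hlr : l ≫ r = f := kernel.lift_ι _ _ _
  have : Mono l := mono_of_mono_fac hlr
  have hf : IsLimit (KernelFork.ofι f (cokernel.condition f)) :=
    Abelian.monoIsKernelOfCokernel (CokernelCofork.ofπ _ (cokernel.condition f))
      (cokernelIsCokernel f)
  have hi : IsLimit (KernelFork.ofι i (cokernel.condition i)) :=
    Abelian.monoIsKernelOfCokernel (CokernelCofork.ofπ _ (cokernel.condition i))
      (cokernelIsCokernel i)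
  obtain ⟨q, hq⟩ : ∃ q, q ≫ i = r ≫ π :=
    ⟨_, (KernelFork.IsLimit.lift' hi (r ≫ π) (by simp [r])).2⟩
  have hlq : l ≫ q = 0 := by
    rw [← cancel_mono i, Category.assoc, hq, ← Category.assoc, hlr]
    simp [π]
  -- `q` is onto: an element of `t` lifts to `Y` along the epimorphism `π`, hence to `K`.
  have : Epi q := by
    rw [epi_iff_surjective_up_to_refinements]
    intro A y
    obtain ⟨A', a, _, z, hz⟩ := surjective_up_to_refinements_of_epi π (y ≫ i)
    have hz0 : z ≫ π ≫ cokernel.π i = 0 := by rw [← Category.assoc, ← hz]; simp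
    refine ⟨A', a, inferInstance, kernel.lift _ z hz0, ?_⟩
    rw [← cancel_mono i]
    simp only [Category.assoc, hq, r, kernel.lift_ι_assoc, hz]
  have hS : (ShortComplex.mk l q hlq).Exact := by
    refine ShortComplex.exact_of_f_is_kernel _ (KernelFork.IsLimit.ofι' l hlq fun k hk => ?_)
    obtain ⟨w, hw⟩ := KernelFork.IsLimit.lift' hf (k ≫ r) (by
      rw [Category.assoc, ← hq, ← Category.assoc, hk, zero_comp])
    exact ⟨w, by rw [← cancel_mono r, Category.assoc, hlr]; exact hw⟩
  have : IsIso (Abelian.factorThruCoimage (π ≫ cokernel.π i)) :=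
    Abelian.isIso_factorThruCoimage _
  exact ⟨kernel (π ≫ cokernel.π i), l, r, inferInstance, inferInstance, hlr,
    ⟨(cokernelIsCokernel l).coconePointUniqueUpToIso hS.gIsCokernel⟩,
    ⟨asIso (Abelian.factorThruCoimage (π ≫ cokernel.π i))⟩⟩

theorem IsTorsionPair.isMonoFactorizationSystem {T F : 𝒞 → Prop} (h : IsTorsionPair T F) :
    IsMonoFactorizationSystem (fun _ _ f => Mono f ∧ T (cokernel f))
      (fun _ _ g => Mono g ∧ F (cokernel g)) where
  mono_of_L _ hf := hf.1
  mono_of_R _ hg := hg.1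
  factor f _ := by
    obtain ⟨t, i, _, ht, hc⟩ := h.exists_mono (cokernel f)
    obtain ⟨K, l, r, hl, hr, hlr, ⟨e₁⟩, ⟨e₂⟩⟩ := exists_factorization_of_mono_cokernel f i
    exact ⟨K, l, r, ⟨hl, h.T_of_iso e₁.symm ht⟩, ⟨hr, h.F_of_iso e₂.symm hc⟩, hlr⟩
  left_eq f := by
    refine ⟨fun ⟨hf, hT⟩ => ⟨hf, fun g hg φ => h.hom_eq_zero hT hg.2 φ⟩,
      fun ⟨hf, hperp⟩ => ⟨hf, h.T_of_forall_hom_eq_zero fun Y hY φ => ?_⟩⟩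
    exact (hperp (0 : (0 : 𝒞) ⟶ Y)
      ⟨inferInstance, h.F_of_iso cokernelZeroIsoTarget.symm hY⟩).eq_zero_of_zero_right φ
  right_eq g := by
    refine ⟨fun ⟨hg, hF⟩ => ⟨hg, fun f hf φ => h.hom_eq_zero hf.2 hF φ⟩,
      fun ⟨hg, hperp⟩ => ⟨hg, h.F_of_forall_hom_eq_zero fun Y hY φ => ?_⟩⟩
    exact (hperp (0 : (0 : 𝒞) ⟶ Y)
      ⟨inferInstance, h.T_of_iso cokernelZeroIsoTarget.symm hY⟩).eq_zero_of_zero_left φ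

lemma isIso_map_kernel_ι {𝒟 : Type*} [Category 𝒟] [Abelian 𝒟] (G : 𝒞 ⥤ 𝒟)
    [G.PreservesZeroMorphisms] {X Y : 𝒞} (f : X ⟶ Y) [PreservesLimit (parallelPair f 0) G]
    (hf : G.map f = 0) : IsIso (G.map (kernel.ι f)) := by
  have := kernel.ι_of_zero hf
  rw [← kernelComparison_comp_ι]
  infer_instance

section Adjunction

variable {𝒟 : Type*} [Category 𝒟] [Abelian 𝒟] {G : 𝒞 ⥤ 𝒟} {H : 𝒟 ⥤ 𝒞}

lemma isZero_obj_of_isZero_leftAdjoint_obj (adj : G ⊣ H) {Y : 𝒟}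
    (h : IsZero (G.obj (H.obj Y))) : IsZero (H.obj Y) := by
  have := adj.isRightAdjoint
  rw [IsZero.iff_id_eq_zero, ← adj.right_triangle_components Y, h.eq_of_src (adj.counit.app Y) 0,
    H.map_zero, comp_zero]

lemma eq_zero_of_homEquiv_symm_eq_zero (adj : G ⊣ H) {X : 𝒞} {Y : 𝒟} (s : X ⟶ H.obj Y)
    (h : (adj.homEquiv X Y).symm s = 0) : s = 0 := by
  have := adj.isRightAdjoint
  rw [← (adj.homEquiv X Y).apply_symm_apply s, h, Adjunction.homEquiv_unit, H.map_zero,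
    comp_zero]

/-- The kernel `K` of `X ⟶ H (G X) ⟶ H (coker i)` is the preimage of the subobject `i` of `G X`;
as `H` is fully faithful, `G K ↪ G X` recovers `i`. -/
lemma exists_iso_map_kernel_ι (adj : G ⊣ H) [H.Full] [H.Faithful] (X : 𝒞) {t : 𝒟}
    (i : t ⟶ G.obj X) [Mono i]
    [PreservesLimit (parallelPair (adj.unit.app X ≫ H.map (cokernel.π i)) 0) G] :
    ∃ e : G.obj (kernel (adj.unit.app X ≫ H.map (cokernel.π i))) ≅ t,
      e.hom ≫ i = G.map (kernel.ι (adj.unit.app X ≫ H.map (cokernel.π i))) := by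
  have := adj.isLeftAdjoint
  set φ := adj.unit.app X ≫ H.map (cokernel.π i)
  have hφ : cokernel.π i = G.map φ ≫ adj.counit.app _ := by simp [φ]
  have hGφ := isKernelCompMono (isLimitOfHasKernelOfPreservesLimit G φ) (adj.counit.app _) hφ
  have hi : IsLimit (KernelFork.ofι i (cokernel.condition i)) :=
    Abelian.monoIsKernelOfCokernel (CokernelCofork.ofπ _ (cokernel.condition i))
      (cokernelIsCokernel i)
  exact ⟨hGφ.conePointUniqueUpToIso hi,
    IsLimit.conePointUniqueUpToIso_hom_comp hGφ hi WalkingParallelPair.zero⟩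

end Adjunction

namespace AbelianRecollement

variable {A B C : Type*} [Category A] [Category B] [Category C]
  [Abelian A] [Abelian B] [Abelian C] (R : AbelianRecollement A B C)

attribute [instance] iStar_full iStar_faithful jStar_full jStar_faithful

instance preservesLimits_jUpperStar : PreservesLimits R.jUpperStar :=
  R.adj₃.rightAdjoint_preservesLimits

instance preservesColimits_jUpperStar : PreservesColimits R.jUpperStar :=
  R.adj₄.leftAdjoint_preservesColimits

instance preservesColimits_iUpperStar : PreservesColimits R.iUpperStar :=
  R.adj₁.leftAdjoint_preservesColimits

instance preservesLimits_iShriek : PreservesLimits R.iShriek :=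
  R.adj₂.rightAdjoint_preservesLimits

lemma isZero_jUpperStar_obj_iStar_obj (Y : A) : IsZero (R.jUpperStar.obj (R.iStar.obj Y)) :=
  (R.isZero_iff _).2 ⟨Y, ⟨Iso.refl _⟩⟩

lemma isZero_iShriek_obj_jStar_obj (Z : C) : IsZero (R.iShriek.obj (R.jStar.obj Z)) :=
  isZero_obj_of_isZero_leftAdjoint_obj (R.adj₂.comp R.adj₄)
    (R.isZero_jUpperStar_obj_iStar_obj _)

lemma eq_zero_of_map_eq_zero {X Y : B} (t : X ⟶ Y)
    (hi : ∀ u : R.iUpperStar.obj X ⟶ R.iShriek.obj Y, u = 0) (hj : R.jUpperStar.map t = 0) :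
    t = 0 := by
  obtain ⟨_, _, hex⟩ := R.left_exact_seq Y
  have ht : t ≫ R.adj₄.unit.app Y = 0 := by
    rw [← R.adj₄.unit_naturality, hj, Functor.map_zero, comp_zero]
  rw [← hex.lift_f t ht, eq_zero_of_homEquiv_symm_eq_zero R.adj₁ (hex.lift t ht) (hi _),
    zero_comp]

variable [PreservesFiniteLimits R.iUpperStar] [PreservesFiniteColimits R.iShriek]
  {T₁ F₁ : A → Prop} {T₂ F₂ : C → Prop}

/-- The torsion part of `X` is obtained in two steps: first the preimage `K ⊆ X` of the torsion
part of `j^* X` under `X ⟶ j_* j^* X`, then the preimage in `K` of the torsion part of `i^* K`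
under `K ⟶ i_* i^* K`. -/
theorem exists_mono_glued (hA : IsTorsionPair T₁ F₁) (hC : IsTorsionPair T₂ F₂) (X : B) :
    ∃ (S : B) (m : S ⟶ X), Mono m ∧
      (T₁ (R.iUpperStar.obj S) ∧ T₂ (R.jUpperStar.obj S)) ∧
      (F₁ (R.iShriek.obj (cokernel m)) ∧ F₂ (R.jUpperStar.obj (cokernel m))) := by
  obtain ⟨t₂, i₂, _, ht₂, hc₂⟩ := hC.exists_mono (R.jUpperStar.obj X)
  obtain ⟨e₂, he₂⟩ := exists_iso_map_kernel_ι R.adj₄ X i₂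
  set φ := R.adj₄.unit.app X ≫ R.jStar.map (cokernel.π i₂)
  obtain ⟨t₁, i₁, _, ht₁, hc₁⟩ := hA.exists_mono (R.iUpperStar.obj (kernel φ))
  obtain ⟨e₁, he₁⟩ := exists_iso_map_kernel_ι R.adj₁ (kernel φ) i₁
  set ψ := R.adj₁.unit.app (kernel φ) ≫ R.iStar.map (cokernel.π i₁)
  have : IsIso (R.jUpperStar.map (kernel.ι ψ)) := isIso_map_kernel_ι _ _
    ((R.isZero_jUpperStar_obj_iStar_obj _).eq_of_tgt _ _)
  have : IsIso (R.iShriek.map (kernel.ι φ)) := isIso_map_kernel_ι _ _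
    ((R.isZero_iShriek_obj_jStar_obj _).eq_of_tgt _ _)
  have eF₁ : R.iShriek.obj (cokernel (kernel.ι ψ ≫ kernel.ι φ)) ≅
      Abelian.coimage (R.iShriek.map ψ) :=
    PreservesCokernel.iso _ _ ≪≫ cokernelIsoOfEq (Functor.map_comp _ _ _) ≪≫
      cokernelCompIsIso _ _ ≪≫ cokernelIsoOfEq (by simp) ≪≫
      cokernelEpiComp (PreservesKernel.iso R.iShriek ψ).hom _
  have eF₂ : R.jUpperStar.obj (cokernel (kernel.ι ψ ≫ kernel.ι φ)) ≅ cokernel i₂ :=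
    PreservesCokernel.iso _ _ ≪≫ cokernelIsoOfEq (Functor.map_comp _ _ _) ≪≫
      cokernelEpiComp _ _ ≪≫ cokernelIsoOfEq he₂.symm ≪≫ cokernelEpiComp _ _
  refine ⟨kernel ψ, kernel.ι ψ ≫ kernel.ι φ, inferInstance,
    ⟨hA.T_of_iso e₁.symm ht₁,
      hC.T_of_iso (e₂.symm ≪≫ (asIso (R.jUpperStar.map (kernel.ι ψ))).symm) ht₂⟩,
    hA.F_of_iso eF₁.symm (hA.F_of_mono (Abelian.factorThruCoimage _) ?_),
    hC.F_of_iso eF₂.symm hc₂⟩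
  exact hA.F_of_iso (asIso (R.adj₂.unit.app _)) hc₁

theorem isTorsionPair_glued (hA : IsTorsionPair T₁ F₁) (hC : IsTorsionPair T₂ F₂) :
    IsTorsionPair (fun X => T₁ (R.iUpperStar.obj X) ∧ T₂ (R.jUpperStar.obj X))
      (fun X => F₁ (R.iShriek.obj X) ∧ F₂ (R.jUpperStar.obj X)) where
  T_of_iso e h :=
    ⟨hA.T_of_iso (R.iUpperStar.mapIso e) h.1, hC.T_of_iso (R.jUpperStar.mapIso e) h.2⟩
  F_of_iso e h :=
    ⟨hA.F_of_iso (R.iShriek.mapIso e) h.1, hC.F_of_iso (R.jUpperStar.mapIso e) h.2⟩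
  hom_eq_zero hX hY t :=
    R.eq_zero_of_map_eq_zero t (hA.hom_eq_zero hX.1 hY.1) (hC.hom_eq_zero hX.2 hY.2 _)
  exists_mono := R.exists_mono_glued hA hC

end AbelianRecollement

theorem glue_monoFactorizationSystem_of_recollement_general
    {A B C : Type*} [Category A] [Category B] [Category C]
    [Abelian A] [Abelian B] [Abelian C]
    (R : AbelianRecollement A B C)
    (h₁ : PreservesFiniteLimits R.iUpperStar)
    (h₄ : PreservesFiniteColimits R.iShriek)
    (E₁ M₁ : MorphismProperty A) (E₂ M₂ : MorphismProperty C)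
    (hA : IsMonoFactorizationSystem E₁ M₁) (hC : IsMonoFactorizationSystem E₂ M₂) :
    IsMonoFactorizationSystem
      (fun _ _ f => Mono f ∧ E₁ (R.iUpperStar.map f) ∧ E₂ (R.jUpperStar.map f))
      (fun _ _ g => Mono g ∧ M₁ (R.iShriek.map g) ∧ M₂ (R.jUpperStar.map g)) := by
  refine (congrArg₂ IsMonoFactorizationSystem ?_ ?_).mpr
    (R.isTorsionPair_glued hA.isTorsionPair hC.isTorsionPair).isMonoFactorizationSystem <;>
    funext _ _ f <;> refine propext (and_congr_right fun _ => and_congr ?_ ?_)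
  · exact hA.isCokernelInvariant_left.map_iff R.iUpperStar f
  · exact hC.isCokernelInvariant_left.map_iff R.jUpperStar f
  · exact hA.isCokernelInvariant_right.map_iff R.iShriek f
  · exact hC.isCokernelInvariant_right.map_iff R.jUpperStar f

/-- gluing monomorphism factorization systems along a recollement of
abelian categories, assuming `i^*` and `i^!` are exact. -/
theorem glue_monoFactorizationSystem_of_recollement
    {A B C : Type*} [Category A] [Category B] [Category C]
    [Abelian A] [Abelian B] [Abelian C]
    (R : AbelianRecollement A B C)
    (h₁ : PreservesFiniteLimits R.iUpperStar) (h₂ : PreservesFiniteColimits R.iUpperStar)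
    (h₃ : PreservesFiniteLimits R.iShriek) (h₄ : PreservesFiniteColimits R.iShriek)
    (E₁ M₁ : MorphismProperty A) (E₂ M₂ : MorphismProperty C)
    (hA : IsMonoFactorizationSystem E₁ M₁) (hC : IsMonoFactorizationSystem E₂ M₂) :
    IsMonoFactorizationSystem
      (fun _ _ f => Mono f ∧ E₁ (R.iUpperStar.map f) ∧ E₂ (R.jUpperStar.map f))
      (fun _ _ g => Mono g ∧ M₁ (R.iShriek.map g) ∧ M₂ (R.jUpperStar.map g)) :=
  glue_monoFactorizationSystem_of_recollement_general R h₁ h₄ E₁ M₁ E₂ M₂ hA hC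

end RecollementFS
end

section
/- Let (A, B, C) be a recollement of triangulated categories with functors i^*, i_*, i^!, j_!, j^*, j_*. Let (E1, M1) and (E2, M2) be inflation factorization systems in A and C, respectively. Set E = {morphisms f in B | i^*(f) ∈ E1 and j^*(f) ∈ E2} and M = {morphisms g in B | i^!(g) ∈ M1 and j^*(g) ∈ M2}. Then (E, M) is an inflation factorization system in B. -/
open CategoryTheory CategoryTheory.Limits CategoryTheory.Pretriangulated

namespace RecollementFS

variable (A B C : Type*) [Category A] [Category B] [Category C]
  [Preadditive A] [Preadditive B] [Preadditive C]
  [HasZeroObject A] [HasZeroObject B] [HasZeroObject C]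
  [HasShift A ℤ] [HasShift B ℤ] [HasShift C ℤ]
  [∀ n : ℤ, (shiftFunctor A n).Additive] [∀ n : ℤ, (shiftFunctor B n).Additive]
  [∀ n : ℤ, (shiftFunctor C n).Additive]
  [Pretriangulated A] [Pretriangulated B] [Pretriangulated C]

/-- A recollement of triangulated categories `(A, B, C)`. -/
structure TriangulatedRecollement where
  /-- `i_* : A ⥤ B` -/
  iStar : A ⥤ B
  /-- `i^* : B ⥤ A` -/
  iUpperStar : B ⥤ A
  /-- `i^! : B ⥤ A` -/
  iShriek : B ⥤ A
  /-- `j^* : B ⥤ C` -/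
  jUpperStar : B ⥤ C
  /-- `j_! : C ⥤ B` -/
  jShriek : C ⥤ B
  /-- `j_* : C ⥤ B` -/
  jStar : C ⥤ B
  iStar_commShift : iStar.CommShift ℤ
  iUpperStar_commShift : iUpperStar.CommShift ℤ
  iShriek_commShift : iShriek.CommShift ℤ
  jUpperStar_commShift : jUpperStar.CommShift ℤ
  jShriek_commShift : jShriek.CommShift ℤ
  jStar_commShift : jStar.CommShift ℤ
  iStar_triangulated : letI := iStar_commShift; iStar.IsTriangulated
  iUpperStar_triangulated : letI := iUpperStar_commShift; iUpperStar.IsTriangulated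
  iShriek_triangulated : letI := iShriek_commShift; iShriek.IsTriangulated
  jUpperStar_triangulated : letI := jUpperStar_commShift; jUpperStar.IsTriangulated
  jShriek_triangulated : letI := jShriek_commShift; jShriek.IsTriangulated
  jStar_triangulated : letI := jStar_commShift; jStar.IsTriangulated
  /-- `i^* ⊣ i_*` -/
  adj₁ : iUpperStar ⊣ iStar
  /-- `i_* ⊣ i^!` -/
  adj₂ : iStar ⊣ iShriek
  /-- `j_! ⊣ j^*` -/
  adj₃ : jShriek ⊣ jUpperStar
  /-- `j^* ⊣ j_*` -/
  adj₄ : jUpperStar ⊣ jStar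
  iStar_full : iStar.Full
  iStar_faithful : iStar.Faithful
  jShriek_full : jShriek.Full
  jShriek_faithful : jShriek.Faithful
  jStar_full : jStar.Full
  jStar_faithful : jStar.Faithful
  /-- `j^*(X) ≅ 0` iff `X` lies in the essential image of `i_*`. -/
  isZero_iff : ∀ X : B, IsZero (jUpperStar.obj X) ↔ ∃ Y : A, Nonempty (iStar.obj Y ≅ X)
  /-- the distinguished triangle `i_* i^! X ⟶ X ⟶ j_* j^* X ⟶ (i_* i^! X)⟦1⟧`. -/
  triangle₁ : ∀ X : B, ∃ h : jStar.obj (jUpperStar.obj X) ⟶ (iStar.obj (iShriek.obj X))⟦(1 : ℤ)⟧,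
    Triangle.mk (adj₂.counit.app X) (adj₄.unit.app X) h ∈ distTriang B
  /-- the distinguished triangle `j_! j^* X ⟶ X ⟶ i_* i^* X ⟶ (j_! j^* X)⟦1⟧`. -/
  triangle₂ : ∀ X : B, ∃ h : iStar.obj (iUpperStar.obj X) ⟶ (jShriek.obj (jUpperStar.obj X))⟦(1 : ℤ)⟧,
    Triangle.mk (adj₃.counit.app X) (adj₁.unit.app X) h ∈ distTriang B

variable {𝒟 : Type*} [Category 𝒟] [Preadditive 𝒟] [HasZeroObject 𝒟]
  [HasShift 𝒟 ℤ] [∀ n : ℤ, (shiftFunctor 𝒟 n).Additive] [Pretriangulated 𝒟]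

/-- `Z` is a cone of `f : X ⟶ Y` if it fits in a distinguished triangle
`X ⟶ Y ⟶ Z ⟶ X⟦1⟧`. -/
def IsConeOf {X Y : 𝒟} (f : X ⟶ Y) (Z : 𝒟) : Prop :=
  ∃ (g : Y ⟶ Z) (h : Z ⟶ X⟦(1 : ℤ)⟧), Triangle.mk f g h ∈ distTriang 𝒟

/-- `l ⊥ r` iff `Hom(C_l, C_r) = 0` and `Hom(C_l, C_r⟦-1⟧) = 0` for cones
`C_l` of `l` and `C_r` of `r`. -/
def ConePerp {X Y Z W : 𝒟} (l : X ⟶ Y) (r : Z ⟶ W) : Prop :=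
  ∀ (Cl Cr : 𝒟), IsConeOf l Cl → IsConeOf r Cr →
    (∀ φ : Cl ⟶ Cr, φ = 0) ∧ (∀ φ : Cl ⟶ Cr⟦(-1 : ℤ)⟧, φ = 0)

/-- An inflation factorization system `(L, R)` in a triangulated category. -/
structure IsInflFactorizationSystem (L R : MorphismProperty 𝒟) : Prop where
  factor : ∀ {X Y : 𝒟} (f : X ⟶ Y),
    ∃ (K : 𝒟) (l : X ⟶ K) (r : K ⟶ Y), L l ∧ R r ∧ l ≫ r = f
  left_eq : ∀ {X Y : 𝒟} (f : X ⟶ Y),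
    L f ↔ ∀ {Z W : 𝒟} (g : Z ⟶ W), R g → ConePerp f g
  right_eq : ∀ {Z W : 𝒟} (g : Z ⟶ W),
    R g ↔ ∀ {X Y : 𝒟} (f : X ⟶ Y), L f → ConePerp f g


/-!
Perpendicularity in `B` can be tested on both sides of the recollement: by the triangle
`i_* i^! V ⟶ V ⟶ j_* j^* V ⟶` and the adjunctions `i^* ⊣ i_*`, `j^* ⊣ j_*`, the groups
`Hom(U, V)` and `Hom(U, V⟦-1⟧)` vanish as soon as their analogues for `(i^* U, i^! V)` and
`(j^* U, j^* V)` do. Conversely `i_*`, `j_*` carry `M₁`, `M₂` into `M` and `i_*`, `j_!` carry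
`E₁`, `E₂` into `E`, and adjunction turns perpendicularity to these images into membership in
`E₁`, `E₂` (resp. `M₁`, `M₂`).

To factor `f`, factor `j^* f = r₂ ∘ l₂` in `C` and lift it along `j^* ⊣ j_*` to `f = p ∘ t`
with the cone of `p` in the image of `j_*`; then factor `i^* t` in `A` and lift it along
`i^* ⊣ i_*` to `t = s ∘ l` with the cone of `s` in the image of `i_*`. As `j^* s` and `i^! p`
are isomorphisms, `l ∈ E` and `p ∘ s ∈ M`.
-/

section Cones

lemma exists_isConeOf {X Y : 𝒟} (f : X ⟶ Y) : ∃ Z, IsConeOf f Z := by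
  obtain ⟨Z, g, h, hT⟩ := distinguished_cocone_triangle f
  exact ⟨Z, g, h, hT⟩

lemma IsConeOf.of_arrow_iso {X Y X' Y' : 𝒟} {f : X ⟶ Y} {f' : X' ⟶ Y'}
    (e : Arrow.mk f ≅ Arrow.mk f') {Z : 𝒟} (hZ : IsConeOf f Z) : IsConeOf f' Z := by
  obtain ⟨g, h, hT⟩ := hZ
  refine ⟨e.inv.right ≫ g, h ≫ e.hom.left⟦(1 : ℤ)⟧', isomorphic_distinguished _ hT _ ?_⟩
  refine Triangle.isoMk _ _ ⟨e.inv.left, e.hom.left, by simp [Triangle.mk], by simp [Triangle.mk]⟩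
    ⟨e.inv.right, e.hom.right, by simp [Triangle.mk], by simp [Triangle.mk]⟩ (Iso.refl Z)
    (Arrow.w_mk e.inv).symm (by simp [Triangle.mk]) ?_
  simp [Triangle.mk, ← Functor.map_comp]

lemma IsConeOf.nonempty_iso {X Y : 𝒟} {f : X ⟶ Y} {Z Z' : 𝒟} (hZ : IsConeOf f Z)
    (hZ' : IsConeOf f Z') : Nonempty (Z ≅ Z') := by
  obtain ⟨g, h, hT⟩ := hZ
  obtain ⟨g', h', hT'⟩ := hZ'
  exact ⟨Triangle.π₃.mapIso (isoTriangleOfIso₁₂ _ _ hT hT' (Iso.refl X) (Iso.refl Y)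
    (by simp [Triangle.mk]))⟩

lemma IsConeOf.isZero_of_isIso {X Y : 𝒟} {f : X ⟶ Y} [IsIso f] {Z : 𝒟} (hZ : IsConeOf f Z) :
    IsZero Z := by
  obtain ⟨g, h, hT⟩ := hZ
  exact (Triangle.isZero₃_iff_isIso₁ _ hT).2 (inferInstanceAs (IsIso f))

end Cones

section Perp

variable {𝒞 : Type*} [Category 𝒞] [HasShift 𝒞 ℤ]

def Perp (U V : 𝒞) : Prop :=
  Subsingleton (U ⟶ V) ∧ Subsingleton (U ⟶ V⟦(-1 : ℤ)⟧)

lemma Perp.of_iso {U U' V V' : 𝒞} (eU : U ≅ U') (eV : V ≅ V') (h : Perp U' V') : Perp U V :=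
  ⟨(eU.homCongr eV).subsingleton_congr.2 h.1,
    (eU.homCongr ((shiftFunctor 𝒞 (-1 : ℤ)).mapIso eV)).subsingleton_congr.2 h.2⟩

lemma Perp.of_isZero_left {U : 𝒞} (hU : IsZero U) (V : 𝒞) : Perp U V :=
  ⟨⟨hU.eq_of_src⟩, ⟨hU.eq_of_src⟩⟩

lemma Perp.of_isZero_right [Preadditive 𝒞] [∀ n : ℤ, (shiftFunctor 𝒞 n).Additive] (U : 𝒞)
    {V : 𝒞} (hV : IsZero V) : Perp U V :=
  ⟨⟨hV.eq_of_tgt⟩, ⟨((shiftFunctor 𝒞 (-1 : ℤ)).map_isZero hV).eq_of_tgt⟩⟩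

lemma _root_.CategoryTheory.Adjunction.perp_iff {𝒞' : Type*} [Category 𝒞'] [HasShift 𝒞' ℤ]
    {F : 𝒞 ⥤ 𝒞'} {G : 𝒞' ⥤ 𝒞} (adj : F ⊣ G) [G.CommShift ℤ] (U : 𝒞) (V : 𝒞') :
    Perp (F.obj U) V ↔ Perp U (G.obj V) :=
  and_congr (adj.homEquiv U V).subsingleton_congr
    ((adj.homEquiv _ _).trans
      ((Iso.refl U).homCongr ((G.commShiftIso (-1 : ℤ)).app V))).subsingleton_congr

end Perp

lemma conePerp_iff_perp {X Y Z W : 𝒟} {l : X ⟶ Y} {r : Z ⟶ W} {Cl Cr : 𝒟}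
    (hl : IsConeOf l Cl) (hr : IsConeOf r Cr) : ConePerp l r ↔ Perp Cl Cr := by
  have perp_iff (U V : 𝒟) :
      Perp U V ↔ (∀ φ : U ⟶ V, φ = 0) ∧ ∀ φ : U ⟶ V⟦(-1 : ℤ)⟧, φ = 0 :=
    and_congr (subsingleton_iff_forall_eq 0) (subsingleton_iff_forall_eq 0)
  refine ⟨fun h => (perp_iff _ _).2 (h Cl Cr hl hr), fun h Cl' Cr' hl' hr' => (perp_iff _ _).1 ?_⟩
  exact h.of_iso (hl'.nonempty_iso hl).some (hr'.nonempty_iso hr).some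

lemma subsingleton_hom_obj₂_of_distTriang {T : Triangle 𝒟} (hT : T ∈ distTriang 𝒟) {U : 𝒟}
    (h₁ : Subsingleton (U ⟶ T.obj₁)) (h₃ : Subsingleton (U ⟶ T.obj₃)) :
    Subsingleton (U ⟶ T.obj₂) := by
  refine (subsingleton_iff_forall_eq 0).2 fun φ => ?_
  obtain ⟨ψ, rfl⟩ := Triangle.coyoneda_exact₂ T hT φ (Subsingleton.elim _ _)
  rw [Subsingleton.elim ψ 0, zero_comp]

lemma perp_obj₂_of_distTriang {T : Triangle 𝒟} (hT : T ∈ distTriang 𝒟) {U : 𝒟}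
    (h₁ : Perp U T.obj₁) (h₃ : Perp U T.obj₃) : Perp U T.obj₂ :=
  ⟨subsingleton_hom_obj₂_of_distTriang hT h₁.1 h₃.1,
    subsingleton_hom_obj₂_of_distTriang (Triangle.shift_distinguished T hT (-1)) h₁.2 h₃.2⟩

section Functor

variable {𝒟' : Type*} [Category 𝒟'] [Preadditive 𝒟'] [HasZeroObject 𝒟']
  [HasShift 𝒟' ℤ] [∀ n : ℤ, (shiftFunctor 𝒟' n).Additive] [Pretriangulated 𝒟']

lemma IsConeOf.map (F : 𝒟 ⥤ 𝒟') [F.CommShift ℤ] [F.IsTriangulated] {X Y : 𝒟} {f : X ⟶ Y}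
    {Z : 𝒟} (hZ : IsConeOf f Z) : IsConeOf (F.map f) (F.obj Z) := by
  obtain ⟨g, h, hT⟩ := hZ
  exact ⟨F.map g, F.map h ≫ (F.commShiftIso (1 : ℤ)).hom.app X, F.map_distinguished _ hT⟩

lemma isIso_map_of_isConeOf (F : 𝒟 ⥤ 𝒟') [F.CommShift ℤ] [F.IsTriangulated] {X Y : 𝒟}
    {f : X ⟶ Y} {Z : 𝒟} (hZ : IsConeOf f Z) (hFZ : IsZero (F.obj Z)) : IsIso (F.map f) := by
  obtain ⟨g, h, hT⟩ := hZ.map F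
  exact (Triangle.isZero₃_iff_isIso₁ _ hT).1 hFZ

lemma _root_.CategoryTheory.Adjunction.conePerp_map_iff {F : 𝒟 ⥤ 𝒟'} {G : 𝒟' ⥤ 𝒟} (adj : F ⊣ G)
    [F.CommShift ℤ] [F.IsTriangulated] [G.CommShift ℤ] [G.IsTriangulated]
    {X Y : 𝒟} (f : X ⟶ Y) {Z W : 𝒟'} (g : Z ⟶ W) : ConePerp (F.map f) g ↔ ConePerp f (G.map g) := by
  obtain ⟨Cf, hCf⟩ := exists_isConeOf f
  obtain ⟨Cg, hCg⟩ := exists_isConeOf g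
  rw [conePerp_iff_perp (hCf.map F) hCg, conePerp_iff_perp hCf (hCg.map G), adj.perp_iff]

end Functor

namespace IsInflFactorizationSystem

variable {L R : MorphismProperty 𝒟}

lemma left_of_isConeOf_iso (h : IsInflFactorizationSystem L R) {X Y X' Y' : 𝒟} {f : X ⟶ Y}
    {f' : X' ⟶ Y'} {Cf Cf' : 𝒟} (hf : IsConeOf f Cf) (hf' : IsConeOf f' Cf') (e : Cf ≅ Cf')
    (hL : L f) : L f' := by
  refine (h.left_eq f').2 fun g hg => ?_
  obtain ⟨Cg, hCg⟩ := exists_isConeOf g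
  rw [conePerp_iff_perp hf' hCg]
  exact ((conePerp_iff_perp hf hCg).1 ((h.left_eq f).1 hL g hg)).of_iso e.symm (Iso.refl _)

lemma right_of_isConeOf_iso (h : IsInflFactorizationSystem L R) {Z W Z' W' : 𝒟} {g : Z ⟶ W}
    {g' : Z' ⟶ W'} {Cg Cg' : 𝒟} (hg : IsConeOf g Cg) (hg' : IsConeOf g' Cg') (e : Cg ≅ Cg')
    (hR : R g) : R g' := by
  refine (h.right_eq g').2 fun f hf => ?_
  obtain ⟨Cf, hCf⟩ := exists_isConeOf f
  rw [conePerp_iff_perp hCf hg']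
  exact ((conePerp_iff_perp hCf hg).1 ((h.right_eq g).1 hR f hf)).of_iso (Iso.refl _) e.symm

lemma respectsIso_left (h : IsInflFactorizationSystem L R) : L.RespectsIso :=
  .of_respects_arrow_iso _ fun f f' e hf => by
    obtain ⟨Cf, hCf⟩ := exists_isConeOf f.hom
    exact h.left_of_isConeOf_iso hCf (hCf.of_arrow_iso e) (Iso.refl _) hf

lemma respectsIso_right (h : IsInflFactorizationSystem L R) : R.RespectsIso :=
  .of_respects_arrow_iso _ fun g g' e hg => by
    obtain ⟨Cg, hCg⟩ := exists_isConeOf g.hom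
    exact h.right_of_isConeOf_iso hCg (hCg.of_arrow_iso e) (Iso.refl _) hg

lemma left_of_isIso (h : IsInflFactorizationSystem L R) {X Y : 𝒟} (f : X ⟶ Y) [IsIso f] :
    L f := by
  refine (h.left_eq f).2 fun g _ => ?_
  obtain ⟨Cf, hCf⟩ := exists_isConeOf f
  obtain ⟨Cg, hCg⟩ := exists_isConeOf g
  exact (conePerp_iff_perp hCf hCg).2 (.of_isZero_left hCf.isZero_of_isIso _)

lemma right_of_isIso (h : IsInflFactorizationSystem L R) {Z W : 𝒟} (g : Z ⟶ W) [IsIso g] :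
    R g := by
  refine (h.right_eq g).2 fun f _ => ?_
  obtain ⟨Cf, hCf⟩ := exists_isConeOf f
  obtain ⟨Cg, hCg⟩ := exists_isConeOf g
  exact (conePerp_iff_perp hCf hCg).2 (.of_isZero_right _ hCg.isZero_of_isIso)

end IsInflFactorizationSystem

lemma _root_.CategoryTheory.Adjunction.exists_map_eq_of_iso {𝒞 𝒞' : Type*} [Category 𝒞]
    [Category 𝒞'] {F : 𝒞 ⥤ 𝒞'} {G : 𝒞' ⥤ 𝒞} (adj : F ⊣ G) [G.Full] [G.Faithful] {X Q : 𝒞}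
    {Z : 𝒞'} (e : Q ≅ G.obj Z) (ψ : F.obj X ⟶ F.obj Q) : ∃ φ : X ⟶ Q, F.map φ = ψ := by
  refine ⟨adj.homEquiv X Z (ψ ≫ F.map e.hom ≫ adj.counit.app Z) ≫ e.inv, ?_⟩
  rw [← cancel_mono (F.map e.hom ≫ adj.counit.app Z)]
  simp only [F.map_comp, Category.assoc, ← F.map_comp_assoc e.inv, e.inv_hom_id, F.map_id,
    Category.id_comp]
  exact (adj.homEquiv_counit _ _ _).symm.trans (Equiv.symm_apply_apply _ _)

section Fiber

variable {𝒟' : Type*} [Category 𝒟'] [Preadditive 𝒟'] [HasZeroObject 𝒟']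
  [HasShift 𝒟' ℤ] [∀ n : ℤ, (shiftFunctor 𝒟' n).Additive] [Pretriangulated 𝒟']
  {F : 𝒟 ⥤ 𝒟'} {G : 𝒟' ⥤ 𝒟} [F.CommShift ℤ] [F.IsTriangulated] [G.Full] [G.Faithful]

lemma exists_map_comp_mor₁_eq (adj : F ⊣ G) {T : Triangle 𝒟} (hT : T ∈ distTriang 𝒟) {Z : 𝒟'}
    (e : T.obj₁ ≅ G.obj Z) {X : 𝒟} (δ : F.obj X ⟶ F.obj T.obj₂) (hδ : δ ≫ F.map T.mor₂ = 0) :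
    ∃ φ : X ⟶ T.obj₁, F.map (φ ≫ T.mor₁) = δ := by
  obtain ⟨ψ, rfl⟩ := Triangle.coyoneda_exact₂ _ (F.map_distinguished T hT) δ hδ
  obtain ⟨φ, rfl⟩ := adj.exists_map_eq_of_iso e ψ
  exact ⟨φ, F.map_comp _ _⟩

lemma exists_iso_map_fiber_unit_comp (adj : F ⊣ G) {Y : 𝒟} {N V : 𝒟'} {r : N ⟶ F.obj Y}
    {c : F.obj Y ⟶ V} {d : V ⟶ N⟦(1 : ℤ)⟧} (hr : Triangle.mk r c d ∈ distTriang 𝒟')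
    {W : 𝒟} {p : W ⟶ Y} {e : G.obj V ⟶ W⟦(1 : ℤ)⟧}
    (hp : Triangle.mk p (adj.unit.app Y ≫ G.map c) e ∈ distTriang 𝒟) :
    ∃ a : F.obj W ≅ N, a.hom ≫ r = F.map p := by
  have hFp := F.map_distinguished _ hp
  have hc : F.map (adj.unit.app Y ≫ G.map c) ≫ adj.counit.app V = 𝟙 _ ≫ c := by simp
  obtain ⟨a, ha₁, ha₃⟩ :=
    complete_distinguished_triangle_morphism₁ _ _ hFp hr (𝟙 _) (adj.counit.app V) hc
  have : IsIso (a : F.obj W ⟶ N) := isIso₁_of_isIso₂₃ (Triangle.homMk _ _ a (𝟙 _) _ ha₁ hc ha₃)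
    hFp hr (inferInstanceAs (IsIso (𝟙 (F.obj Y)))) (inferInstanceAs (IsIso (adj.counit.app V)))
  exact ⟨@asIso _ _ _ _ a this, ha₁.symm.trans (Category.comp_id _)⟩

/-- `p` is the fibre of `Y ⟶ G (F Y) ⟶ G V`. -/
lemma exists_comp_eq_of_map_eq_comp (adj : F ⊣ G) [G.CommShift ℤ] {X Y : 𝒟} (f : X ⟶ Y)
    {N V : 𝒟'} (l : F.obj X ⟶ N) (r : N ⟶ F.obj Y) (hlr : l ≫ r = F.map f) (hr : IsConeOf r V) :
    ∃ (W : 𝒟) (t : X ⟶ W) (p : W ⟶ Y) (a : F.obj W ≅ N),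
      t ≫ p = f ∧ IsConeOf p (G.obj V) ∧ F.map t ≫ a.hom = l ∧ a.hom ≫ r = F.map p := by
  obtain ⟨c, d, hr⟩ := hr
  obtain ⟨W, p, e, hp⟩ := distinguished_cocone_triangle₁ (adj.unit.app Y ≫ G.map c : Y ⟶ G.obj V)
  obtain ⟨a, ha⟩ := exists_iso_map_fiber_unit_comp adj hr hp
  have := adj.isRightAdjoint
  have hf : f ≫ adj.unit.app Y ≫ G.map c = 0 := by
    have hrc : r ≫ c = 0 := comp_distTriang_mor_zero₁₂ _ hr
    rw [← adj.unit_naturality_assoc, ← G.map_comp, ← hlr, Category.assoc, hrc, comp_zero,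
      G.map_zero, comp_zero]
  obtain ⟨t₀, ht₀⟩ : ∃ t₀ : X ⟶ W, f = t₀ ≫ p := Triangle.coyoneda_exact₂ _ hp f hf
  -- `F t₀ ≫ a` may differ from `l`; the error is killed by `F p`, so it lifts along the fibre
  -- of `p` and can be subtracted from `t₀`
  have hδ : (F.map t₀ - l ≫ a.inv) ≫ F.map p = 0 := by
    rw [Preadditive.sub_comp, ← F.map_comp, ← ht₀, ← ha, Category.assoc, a.inv_hom_id_assoc, hlr,
      sub_self]
  have hp' := inv_rot_of_distTriang _ hp
  obtain ⟨k, hkp, φ, hφ⟩ : ∃ k : (G.obj V)⟦(-1 : ℤ)⟧ ⟶ W, k ≫ p = 0 ∧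
      ∃ φ : X ⟶ (G.obj V)⟦(-1 : ℤ)⟧, F.map (φ ≫ k) = F.map t₀ - l ≫ a.inv :=
    ⟨_, comp_distTriang_mor_zero₁₂ _ hp',
      exists_map_comp_mor₁_eq adj hp' ((G.commShiftIso (-1 : ℤ)).app V).symm _ hδ⟩
  refine ⟨W, t₀ - φ ≫ k, p, a, ?_, ⟨_, _, hp⟩, ?_, ha⟩
  · rw [Preadditive.sub_comp, Category.assoc, hkp, comp_zero, sub_zero, ht₀]
  · rw [F.map_sub, hφ, sub_sub_cancel, Category.assoc, a.inv_hom_id, Category.comp_id]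

end Fiber

namespace TriangulatedRecollement

variable {A B C}

attribute [local instance] iStar_commShift iUpperStar_commShift iShriek_commShift
  jUpperStar_commShift jShriek_commShift jStar_commShift iStar_triangulated
  iUpperStar_triangulated iShriek_triangulated jUpperStar_triangulated jShriek_triangulated
  jStar_triangulated iStar_full iStar_faithful jShriek_full jShriek_faithful jStar_full
  jStar_faithful

variable (R : TriangulatedRecollement A B C)

def gluedLeft (E₁ : MorphismProperty A) (E₂ : MorphismProperty C) : MorphismProperty B :=
  fun _ _ f => E₁ (R.iUpperStar.map f) ∧ E₂ (R.jUpperStar.map f)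

def gluedRight (M₁ : MorphismProperty A) (M₂ : MorphismProperty C) : MorphismProperty B :=
  fun _ _ g => M₁ (R.iShriek.map g) ∧ M₂ (R.jUpperStar.map g)

lemma isZero_jUpperStar_obj_iStar_obj (X : A) : IsZero (R.jUpperStar.obj (R.iStar.obj X)) :=
  (R.isZero_iff _).2 ⟨X, ⟨Iso.refl _⟩⟩

lemma isZero_iShriek_obj_jStar_obj (Y : C) : IsZero (R.iShriek.obj (R.jStar.obj Y)) := by
  have : Subsingleton (R.jUpperStar.obj (R.iStar.obj (R.iShriek.obj (R.jStar.obj Y))) ⟶ Y) :=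
    ⟨(R.isZero_jUpperStar_obj_iStar_obj _).eq_of_src⟩
  rw [IsZero.iff_id_eq_zero]
  exact ((R.adj₂.homEquiv _ _).symm.trans (R.adj₄.homEquiv _ _).symm).subsingleton.elim _ _

lemma isZero_iUpperStar_obj_jShriek_obj (Y : C) : IsZero (R.iUpperStar.obj (R.jShriek.obj Y)) := by
  have : Subsingleton (Y ⟶ R.jUpperStar.obj (R.iStar.obj (R.iUpperStar.obj (R.jShriek.obj Y)))) :=
    ⟨(R.isZero_jUpperStar_obj_iStar_obj _).eq_of_tgt⟩
  rw [IsZero.iff_id_eq_zero]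
  exact ((R.adj₁.homEquiv _ _).trans (R.adj₃.homEquiv _ _)).subsingleton.elim _ _

lemma perp_of_perp_iUpperStar_iShriek {U V : B} (h₁ : Perp (R.iUpperStar.obj U) (R.iShriek.obj V))
    (h₂ : Perp (R.jUpperStar.obj U) (R.jUpperStar.obj V)) : Perp U V := by
  obtain ⟨_, hT⟩ := R.triangle₁ V
  exact perp_obj₂_of_distTriang hT ((R.adj₁.perp_iff _ _).1 h₁) ((R.adj₄.perp_iff _ _).1 h₂)

variable {R} {E₁ M₁ : MorphismProperty A} {E₂ M₂ : MorphismProperty C}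

lemma conePerp_of_gluedLeft_of_gluedRight (hA : IsInflFactorizationSystem E₁ M₁)
    (hC : IsInflFactorizationSystem E₂ M₂) {X Y Z W : B} {f : X ⟶ Y} {g : Z ⟶ W}
    (hf : R.gluedLeft E₁ E₂ f) (hg : R.gluedRight M₁ M₂ g) : ConePerp f g := by
  obtain ⟨Cf, hCf⟩ := exists_isConeOf f
  obtain ⟨Cg, hCg⟩ := exists_isConeOf g
  rw [conePerp_iff_perp hCf hCg]
  exact R.perp_of_perp_iUpperStar_iShriek
    ((conePerp_iff_perp (hCf.map _) (hCg.map _)).1 ((hA.left_eq _).1 hf.1 _ hg.1))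
    ((conePerp_iff_perp (hCf.map _) (hCg.map _)).1 ((hC.left_eq _).1 hf.2 _ hg.2))

lemma gluedRight_iStar_map (hA : IsInflFactorizationSystem E₁ M₁)
    (hC : IsInflFactorizationSystem E₂ M₂) {X Y : A} {g : X ⟶ Y} (hg : M₁ g) :
    R.gluedRight M₁ M₂ (R.iStar.map g) := by
  have := hA.respectsIso_right
  have := (R.isZero_jUpperStar_obj_iStar_obj X).isIso (R.isZero_jUpperStar_obj_iStar_obj Y)
    (R.jUpperStar.map (R.iStar.map g))
  exact ⟨(M₁.arrow_mk_iso_iff (Arrow.isoOfNatIso (asIso R.adj₂.unit) (Arrow.mk g))).1 hg,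
    hC.right_of_isIso _⟩

lemma gluedRight_jStar_map (hA : IsInflFactorizationSystem E₁ M₁)
    (hC : IsInflFactorizationSystem E₂ M₂) {X Y : C} {g : X ⟶ Y} (hg : M₂ g) :
    R.gluedRight M₁ M₂ (R.jStar.map g) := by
  have := hC.respectsIso_right
  have := (R.isZero_iShriek_obj_jStar_obj X).isIso (R.isZero_iShriek_obj_jStar_obj Y)
    (R.iShriek.map (R.jStar.map g))
  exact ⟨hA.right_of_isIso _,
    (M₂.arrow_mk_iso_iff (Arrow.isoOfNatIso (asIso R.adj₄.counit) (Arrow.mk g))).2 hg⟩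

lemma gluedLeft_iStar_map (hA : IsInflFactorizationSystem E₁ M₁)
    (hC : IsInflFactorizationSystem E₂ M₂) {X Y : A} {f : X ⟶ Y} (hf : E₁ f) :
    R.gluedLeft E₁ E₂ (R.iStar.map f) := by
  have := hA.respectsIso_left
  have := (R.isZero_jUpperStar_obj_iStar_obj X).isIso (R.isZero_jUpperStar_obj_iStar_obj Y)
    (R.jUpperStar.map (R.iStar.map f))
  exact ⟨(E₁.arrow_mk_iso_iff (Arrow.isoOfNatIso (asIso R.adj₁.counit) (Arrow.mk f))).2 hf,
    hC.left_of_isIso _⟩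

lemma gluedLeft_jShriek_map (hA : IsInflFactorizationSystem E₁ M₁)
    (hC : IsInflFactorizationSystem E₂ M₂) {X Y : C} {f : X ⟶ Y} (hf : E₂ f) :
    R.gluedLeft E₁ E₂ (R.jShriek.map f) := by
  have := hC.respectsIso_left
  have := (R.isZero_iUpperStar_obj_jShriek_obj X).isIso (R.isZero_iUpperStar_obj_jShriek_obj Y)
    (R.iUpperStar.map (R.jShriek.map f))
  exact ⟨hA.left_of_isIso _,
    (E₂.arrow_mk_iso_iff (Arrow.isoOfNatIso (asIso R.adj₃.unit) (Arrow.mk f))).1 hf⟩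

lemma gluedLeft_of_forall_conePerp (hA : IsInflFactorizationSystem E₁ M₁)
    (hC : IsInflFactorizationSystem E₂ M₂) {X Y : B} {f : X ⟶ Y}
    (hf : ∀ {Z W : B} (g : Z ⟶ W), R.gluedRight M₁ M₂ g → ConePerp f g) :
    R.gluedLeft E₁ E₂ f :=
  ⟨(hA.left_eq _).2 fun g hg =>
      (R.adj₁.conePerp_map_iff f g).2 (hf _ (gluedRight_iStar_map hA hC hg)),
    (hC.left_eq _).2 fun g hg =>
      (R.adj₄.conePerp_map_iff f g).2 (hf _ (gluedRight_jStar_map hA hC hg))⟩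

lemma gluedRight_of_forall_conePerp (hA : IsInflFactorizationSystem E₁ M₁)
    (hC : IsInflFactorizationSystem E₂ M₂) {Z W : B} {g : Z ⟶ W}
    (hg : ∀ {X Y : B} (f : X ⟶ Y), R.gluedLeft E₁ E₂ f → ConePerp f g) :
    R.gluedRight M₁ M₂ g :=
  ⟨(hA.right_eq _).2 fun f hf =>
      (R.adj₂.conePerp_map_iff f g).1 (hg _ (gluedLeft_iStar_map hA hC hf)),
    (hC.right_eq _).2 fun f hf =>
      (R.adj₃.conePerp_map_iff f g).1 (hg _ (gluedLeft_jShriek_map hA hC hf))⟩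

lemma exists_gluedLeft_gluedRight_factorization (hA : IsInflFactorizationSystem E₁ M₁)
    (hC : IsInflFactorizationSystem E₂ M₂) {X Y : B} (f : X ⟶ Y) :
    ∃ (K : B) (l : X ⟶ K) (r : K ⟶ Y), R.gluedLeft E₁ E₂ l ∧ R.gluedRight M₁ M₂ r ∧ l ≫ r = f := by
  obtain ⟨N₂, l₂, r₂, hl₂, hr₂, hlr₂⟩ := hC.factor (R.jUpperStar.map f)
  obtain ⟨V₂, hV₂⟩ := exists_isConeOf r₂
  obtain ⟨W, t, p, e₂, rfl, hp, ht₂, hp₂⟩ :=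
    exists_comp_eq_of_map_eq_comp R.adj₄ f l₂ r₂ hlr₂ hV₂
  obtain ⟨N₁, l₁, r₁, hl₁, hr₁, hlr₁⟩ := hA.factor (R.iUpperStar.map t)
  obtain ⟨V₁, hV₁⟩ := exists_isConeOf r₁
  obtain ⟨K, l, s, e₁, rfl, hs, hl₁', -⟩ :=
    exists_comp_eq_of_map_eq_comp R.adj₁ t l₁ r₁ hlr₁ hV₁
  have := hA.respectsIso_left
  have := hA.respectsIso_right
  have := hC.respectsIso_left
  have := hC.respectsIso_right
  have : IsIso (R.jUpperStar.map s) :=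
    isIso_map_of_isConeOf _ hs (R.isZero_jUpperStar_obj_iStar_obj V₁)
  have : IsIso (R.iShriek.map p) := isIso_map_of_isConeOf _ hp (R.isZero_iShriek_obj_jStar_obj V₂)
  refine ⟨K, l, s ≫ p, ⟨?_, ?_⟩, ⟨?_, ?_⟩, (Category.assoc _ _ _).symm⟩
  · exact (E₁.arrow_mk_iso_iff (Arrow.isoMk' _ _ (Iso.refl _) e₁ (by simp [hl₁']))).2 hl₁
  · rw [← E₂.cancel_right_of_respectsIso _ (R.jUpperStar.map s), ← Functor.map_comp]
    exact (E₂.arrow_mk_iso_iff (Arrow.isoMk' _ _ (Iso.refl _) e₂ (by simp [← ht₂]))).2 hl₂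
  · rw [Functor.map_comp, M₁.cancel_right_of_respectsIso]
    exact hA.right_of_isConeOf_iso hV₁ (hs.map R.iShriek) (asIso (R.adj₂.unit.app V₁)) hr₁
  · rw [Functor.map_comp, M₂.cancel_left_of_respectsIso]
    exact (M₂.arrow_mk_iso_iff (Arrow.isoMk' _ r₂ e₂ (Iso.refl _) (by simp [hp₂]))).2 hr₂

end TriangulatedRecollement

/-- gluing inflation factorization systems along a recollement of
triangulated categories. -/
theorem glue_inflFactorizationSystem_of_recollement
    (R : TriangulatedRecollement A B C)
    (E₁ M₁ : MorphismProperty A) (E₂ M₂ : MorphismProperty C)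
    (hA : IsInflFactorizationSystem E₁ M₁) (hC : IsInflFactorizationSystem E₂ M₂) :
    IsInflFactorizationSystem
      (fun _ _ f => E₁ (R.iUpperStar.map f) ∧ E₂ (R.jUpperStar.map f))
      (fun _ _ g => M₁ (R.iShriek.map g) ∧ M₂ (R.jUpperStar.map g)) :=
  ⟨R.exists_gluedLeft_gluedRight_factorization hA hC,
    fun _ => ⟨fun hf _ _ _ hg => R.conePerp_of_gluedLeft_of_gluedRight hA hC hf hg,
      R.gluedLeft_of_forall_conePerp hA hC⟩,
    fun _ => ⟨fun hg _ _ _ hf => R.conePerp_of_gluedLeft_of_gluedRight hA hC hf hg,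
      R.gluedRight_of_forall_conePerp hA hC⟩⟩

end RecollementFS
end
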